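/- Let r > 0, 0 < p < 1, and n be a non-negative integer. Let W be a random variable taking values in {0,1,...,n}, and suppose there is a constant C ≥ 0 such that for every bounded function g : ℕ → ℝ, | E[ p(r+W)·g(W+1) − W·g(W) ] | ≤ C · sup_{i ∈ ℕ} | g(i+1) − g(i) |. Then d_TV( L(W), NB^{[0,n]}(r,p) ) ≤ C·(1 − π_0)/(p·r) ≤ C·(1 − (1−p)^r)/(p·r), where π_0 = P(Z = 0)/P(Z ≤ n) for Z ~ NB(r,p). -/

import Mathlib

/-- The negative binomial pmf: `P(Z = k)` for `Z ~ NB(r,p)`. -/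
noncomputable def nbPmf (r p : ℝ) (k : ℕ) : ℝ :=
  Real.Gamma (r + k) / (Real.Gamma r * k.factorial) * (1 - p) ^ r * p ^ k

/-- The truncated negative binomial pmf on `{0,...,n}`:
`π_i = P(Z = i) / P(Z ≤ n)` for `Z ~ NB(r,p)`. -/
noncomputable def truncNbPmf (r p : ℝ) (n i : ℕ) : ℝ :=
  nbPmf r p i / ∑ j ∈ Finset.range (n + 1), nbPmf r p j


open MeasureTheory

/-!
Stein's method. Write `w = nbPmf r p` and `S = ∑_{i ≤ n} w i`, so that `π i = w i / S`, and let
`f i` be the sign of `P(W = i) - π i`. Thanks to the recursion `(k + 1) w (k + 1) = p (r + k) w k`,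
the Stein equation `p (r + k) g (k + 1) - k g k = f k - π(f)` (`k ≤ n`) is solved by
`g t = ∑_{i < t} w i (f i - π(f)) / (t w t)`. Evaluated at `W` it gives
`E[p (r + W) g (W + 1) - W g W] = ∑ |P(W = i) - π i|`, so it remains to bound the increments of `g`.

The solution is linear in `f`: `S g t = ∑_j f j K j t`. For fixed `k`, the increments
`K j (k + 1) - K j k` sum to zero and are `≤ 0` for `j ≠ k`, because the recursion makes
`t ↦ ∑_{i < t} w i / (t w t)` increasing and `t ↦ ∑_{t ≤ i ≤ n} w i / (t w t)` decreasing.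
Hence `|S Δg k| ≤ 2 (K k (k + 1) - K k k) ≤ 2 (S - w 0) / (p r)`. Finally
`π 0 ≥ w 0 = (1 - p) ^ r` because the whole negative binomial series sums to `1`.
-/

open Finset

lemma Real.Gamma_add_nat_eq_mul_ascPochhammer {r : ℝ} (hr : 0 < r) (k : ℕ) :
    Real.Gamma (r + k) = Real.Gamma r * (ascPochhammer ℝ k).eval r := by
  induction k with
  | zero => simp
  | succ k ih =>
    rw [Nat.cast_succ, ← add_assoc, Real.Gamma_add_one (by positivity), ih,
      ascPochhammer_succ_eval]
    ring

lemma Ring.choose_add_natCast_sub_one_eq_Gamma_div {r : ℝ} (hr : 0 < r) (k : ℕ) :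
    Ring.choose (r + k - 1) k = Real.Gamma (r + k) / (Real.Gamma r * k.factorial) := by
  have h := Ring.factorial_nsmul_multichoose_eq_ascPochhammer r k
  rw [Ring.multichoose_eq, Polynomial.ascPochhammer_smeval_eq_eval, nsmul_eq_mul] at h
  rw [Real.Gamma_add_nat_eq_mul_ascPochhammer hr, ← h,
    mul_div_mul_left _ _ (Real.Gamma_pos_of_pos hr).ne']
  field_simp

lemma hasSum_nbPmf {r p : ℝ} (hr : 0 < r) (hp0 : 0 ≤ p) (hp1 : p < 1) :
    HasSum (nbPmf r p) 1 := by
  have hp : p ∈ Metric.eball (0 : ℝ) 1 := by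
    rw [Metric.mem_eball, edist_zero_right, enorm_eq_nnnorm]
    exact_mod_cast (show |p| < 1 by rwa [abs_of_nonneg hp0])
  have h := (Real.one_div_one_sub_rpow_hasFPowerSeriesOnBall_zero r).hasSum hp
  simp only [FormalMultilinearSeries.ofScalars_apply_eq, zero_add, smul_eq_mul] at h
  have hq : (1 - p) ^ r ≠ 0 := (Real.rpow_pos_of_pos (by linarith) r).ne'
  have hpmf : nbPmf r p = fun k : ℕ => (1 - p) ^ r * (Ring.choose (r + k - 1) k * p ^ k) := by
    funext k
    rw [Ring.choose_add_natCast_sub_one_eq_Gamma_div hr, nbPmf]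
    ring
  rw [hpmf]
  simpa only [mul_one_div_cancel hq] using h.mul_left ((1 - p) ^ r)

lemma nbPmf_pos {r p : ℝ} (hr : 0 < r) (hp0 : 0 < p) (hp1 : p < 1) (k : ℕ) :
    0 < nbPmf r p k := by
  have := Real.Gamma_pos_of_pos (show 0 < r + k by positivity)
  have := Real.Gamma_pos_of_pos hr
  have := Real.rpow_pos_of_pos (show 0 < 1 - p by linarith) r
  unfold nbPmf
  positivity

lemma nbPmf_zero {r : ℝ} (hr : 0 < r) (p : ℝ) : nbPmf r p 0 = (1 - p) ^ r := by
  simp [nbPmf, (Real.Gamma_pos_of_pos hr).ne']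

lemma nbPmf_le_truncNbPmf {r p : ℝ} (hr : 0 < r) (hp0 : 0 < p) (hp1 : p < 1) (n i : ℕ) :
    nbPmf r p i ≤ truncNbPmf r p n i := by
  have hS : 0 < ∑ j ∈ range (n + 1), nbPmf r p j :=
    sum_pos (fun j _ => nbPmf_pos hr hp0 hp1 j) nonempty_range_add_one
  rw [truncNbPmf, le_div_iff₀ hS]
  exact mul_le_of_le_one_right (nbPmf_pos hr hp0 hp1 i).le
    (sum_le_hasSum _ (fun j _ => (nbPmf_pos hr hp0 hp1 j).le) (hasSum_nbPmf hr hp0.le hp1))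

structure IsNegBinomialWeight (r p : ℝ) (w : ℕ → ℝ) : Prop where
  pos : ∀ k, 0 < w k
  succ_mul : ∀ k : ℕ, ((k : ℝ) + 1) * w (k + 1) = p * (r + k) * w k

lemma isNegBinomialWeight_nbPmf {r p : ℝ} (hr : 0 < r) (hp0 : 0 < p) (hp1 : p < 1) :
    IsNegBinomialWeight r p (nbPmf r p) where
  pos := nbPmf_pos hr hp0 hp1
  succ_mul k := by
    have hΓ := Real.Gamma_add_one (show r + k ≠ 0 by positivity)
    have := (Real.Gamma_pos_of_pos hr).ne'
    simp only [nbPmf, Nat.factorial_succ, Nat.cast_mul, Nat.cast_succ, pow_succ, ← add_assoc, hΓ]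
    field_simp

noncomputable def headRatio (w : ℕ → ℝ) (t : ℕ) : ℝ :=
  (∑ i ∈ range t, w i) / (t * w t)

noncomputable def tailRatio (w : ℕ → ℝ) (n t : ℕ) : ℝ :=
  (∑ i ∈ Ico t (n + 1), w i) / (t * w t)

namespace IsNegBinomialWeight

variable {r p : ℝ} {w : ℕ → ℝ}

lemma mul_sum_range_le_mul_sum_range_succ (hw : IsNegBinomialWeight r p w) (hp : p ≤ 1)
    (k : ℕ) : p * (r + k) * ∑ i ∈ range k, w i ≤ k * ∑ i ∈ range (k + 1), w i := by
  induction k with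
  | zero => simp
  | succ k ih =>
    have hF : 0 ≤ ∑ i ∈ range (k + 1), w i := sum_nonneg fun i _ => (hw.pos i).le
    rw [sum_range_succ _ (k + 1), sum_range_succ _ k] at *
    push_cast
    nlinarith [hw.succ_mul k]

lemma headRatio_le_succ (hw : IsNegBinomialWeight r p w) (hr : 0 < r) (hp0 : 0 < p)
    (hp1 : p ≤ 1) (k : ℕ) : headRatio w k ≤ headRatio w (k + 1) := by
  have hnonneg : 0 ≤ headRatio w (k + 1) :=
    div_nonneg (sum_nonneg fun i _ => (hw.pos i).le) (by have := hw.pos (k + 1); positivity)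
  rcases k.eq_zero_or_pos with rfl | hk
  · simpa [headRatio] using hnonneg
  have := hw.pos k
  rw [headRatio, headRatio, Nat.cast_succ, hw.succ_mul,
    div_le_div_iff₀ (by positivity) (by positivity)]
  nlinarith [hw.mul_sum_range_le_mul_sum_range_succ hp1 k]

lemma tailRatio_succ_le (hw : IsNegBinomialWeight r p w) (hr : 0 < r) (hp : 0 < p) (n : ℕ)
    {k : ℕ} (hk : 1 ≤ k) : tailRatio w n (k + 1) ≤ tailRatio w n k := by
  have hterm : ∀ i ∈ Ico k n, k * w (i + 1) ≤ p * (r + k) * w i := by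
    intro i hi
    have hi' : (k : ℝ) ≤ i := by exact_mod_cast (mem_Ico.1 hi).1
    have hpw : 0 < p * w i := mul_pos hp (hw.pos i)
    refine le_of_mul_le_mul_left ?_ (by positivity : (0 : ℝ) < i + 1)
    calc (i + 1) * (k * w (i + 1)) = k * (p * (r + i) * w i) := by
          rw [← hw.succ_mul]; ring
      _ ≤ (i + 1) * (p * (r + k) * w i) := by
          have : 0 ≤ r * (i + 1 - k) + k := by nlinarith
          nlinarith [mul_nonneg hpw.le this]
  have hsum : k * ∑ i ∈ Ico (k + 1) (n + 1), w i ≤ p * (r + k) * ∑ i ∈ Ico k (n + 1), w i :=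
    calc k * ∑ i ∈ Ico (k + 1) (n + 1), w i = ∑ i ∈ Ico k n, k * w (i + 1) := by
          rw [mul_sum, ← sum_Ico_add' (c := 1)]
      _ ≤ ∑ i ∈ Ico k n, p * (r + k) * w i := sum_le_sum hterm
      _ = p * (r + k) * ∑ i ∈ Ico k n, w i := (mul_sum ..).symm
      _ ≤ p * (r + k) * ∑ i ∈ Ico k (n + 1), w i := by
          gcongr
          · exact fun i _ _ => (hw.pos i).le
          · exact n.le_succ
  have hkw := hw.pos k
  rw [tailRatio, tailRatio, Nat.cast_succ, hw.succ_mul,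
    div_le_div_iff₀ (by positivity) (by positivity)]
  linarith [mul_le_mul_of_nonneg_right hsum hkw.le]

lemma mul_headRatio_le (hw : IsNegBinomialWeight r p w) (hr : 0 < r) (hp : 0 < p) (k : ℕ) :
    w k * headRatio w k ≤ (∑ i ∈ range (k + 1), w i - w 0) / (p * r) := by
  rcases k.eq_zero_or_pos with rfl | hk
  · simp [headRatio]
  have hterm : ∀ i ∈ range k, p * r * w i ≤ w (i + 1) * k := by
    intro i hi
    have hi' : (i : ℝ) + 1 ≤ k := by exact_mod_cast mem_range.1 hi
    have hpw : 0 < p * w i := mul_pos hp (hw.pos i)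
    refine le_of_mul_le_mul_left ?_ (by positivity : (0 : ℝ) < i + 1)
    calc (i + 1) * (p * r * w i) ≤ k * (p * (r + i) * w i) := by
          have : 0 ≤ (k - i - 1) * r + k * i := by nlinarith
          nlinarith [mul_nonneg hpw.le this]
      _ = (i + 1) * (w (i + 1) * k) := by rw [← hw.succ_mul]; ring
  have hkw := hw.pos k
  rw [headRatio, sum_range_succ', add_sub_cancel_right, mul_div_assoc', mul_comm (k : ℝ),
    mul_div_mul_left _ _ hkw.ne', div_le_div_iff₀ (by positivity) (by positivity),
    mul_comm _ (p * r), mul_sum, sum_mul]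
  exact sum_le_sum hterm

lemma mul_tailRatio_succ_le (hw : IsNegBinomialWeight r p w) (hr : 0 < r) (hp : 0 < p)
    (n k : ℕ) :
    w k * tailRatio w n (k + 1) ≤ (∑ i ∈ Ico (k + 1) (n + 1), w i) / (p * r) := by
  have hkw := hw.pos k
  rw [tailRatio, Nat.cast_succ, hw.succ_mul, mul_div_assoc', mul_comm (p * (r + k)),
    mul_div_mul_left _ _ hkw.ne']
  gcongr
  · exact sum_nonneg fun i _ => (hw.pos i).le
  · linarith [k.cast_nonneg (α := ℝ)]

end IsNegBinomialWeight

noncomputable def weightedMean (w f : ℕ → ℝ) (n : ℕ) : ℝ :=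
  (∑ i ∈ range (n + 1), w i * f i) / ∑ i ∈ range (n + 1), w i

/-- At `t = 0` this is `0 / 0 = 0`, matching `steinKernel w n j 0 = 0`. -/
noncomputable def steinSolution (w h : ℕ → ℝ) (n t : ℕ) : ℝ :=
  (∑ i ∈ range (min t (n + 1)), w i * h i) / (min t (n + 1) * w (min t (n + 1)))

noncomputable def steinKernel (w : ℕ → ℝ) (n j t : ℕ) : ℝ :=
  w j * if j < t then tailRatio w n t else -headRatio w t

section SteinSolution

variable {w h : ℕ → ℝ} {n : ℕ}

lemma steinSolution_of_le {t : ℕ} (ht : t ≤ n + 1) :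
    steinSolution w h n t = (∑ i ∈ range t, w i * h i) / (t * w t) := by
  rw [steinSolution, min_eq_left ht]

lemma steinSolution_min (t : ℕ) :
    steinSolution w h n (min t (n + 1)) = steinSolution w h n t := by
  rw [steinSolution, steinSolution, min_assoc, min_self]

lemma steinSolution_succ_of_le {k : ℕ} (hk : n + 1 ≤ k) :
    steinSolution w h n (k + 1) = steinSolution w h n k := by
  rw [← steinSolution_min k, ← steinSolution_min (k + 1), min_eq_right hk,
    min_eq_right (hk.trans k.le_succ)]

lemma exists_forall_abs_steinSolution_le : ∃ M, ∀ t, |steinSolution w h n t| ≤ M := by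
  refine ⟨∑ s ∈ range (n + 2), |steinSolution w h n s|, fun t => ?_⟩
  rw [← steinSolution_min t]
  exact single_le_sum (f := fun s => |steinSolution w h n s|) (fun s _ => abs_nonneg _)
    (mem_range.2 (by omega))

lemma sum_mul_steinKernel {f : ℕ → ℝ} (hS : ∑ i ∈ range (n + 1), w i ≠ 0) {t : ℕ}
    (ht : t ≤ n + 1) :
    ∑ j ∈ range (n + 1), f j * steinKernel w n j t =
      (∑ i ∈ range (n + 1), w i) * steinSolution w (fun i => f i - weightedMean w f n) n t := by
  have hhead : ∑ j ∈ range t, f j * steinKernel w n j t =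
      (∑ j ∈ range t, w j * f j) * tailRatio w n t := by
    rw [sum_mul]
    refine sum_congr rfl fun j hj => ?_
    rw [steinKernel, if_pos (mem_range.1 hj)]
    ring
  have htail : ∑ j ∈ Ico t (n + 1), f j * steinKernel w n j t =
      -((∑ j ∈ Ico t (n + 1), w j * f j) * headRatio w t) := by
    rw [sum_mul, ← sum_neg_distrib]
    refine sum_congr rfl fun j hj => ?_
    rw [steinKernel, if_neg (not_lt.2 (mem_Ico.1 hj).1)]
    ring
  rw [← sum_range_add_sum_Ico _ ht, hhead, htail, steinSolution_of_le ht, weightedMean,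
    ← sum_range_add_sum_Ico _ ht, ← sum_range_add_sum_Ico (fun i => w i * f i) ht, tailRatio,
    headRatio]
  rw [← sum_range_add_sum_Ico _ ht] at hS
  simp only [mul_sub, sum_sub_distrib, ← sum_mul]
  field_simp
  ring

lemma sum_steinKernel (hS : ∑ i ∈ range (n + 1), w i ≠ 0) {t : ℕ} (ht : t ≤ n + 1) :
    ∑ j ∈ range (n + 1), steinKernel w n j t = 0 := by
  have h := sum_mul_steinKernel (f := fun _ => 1) hS ht
  simp only [one_mul, weightedMean, mul_one, div_self hS, sub_self, mul_zero, sum_const_zero,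
    zero_div, steinSolution] at h
  exact h

end SteinSolution

lemma abs_sum_mul_le_two_mul {ι : Type*} [DecidableEq ι] {s : Finset ι} {f d : ι → ℝ}
    {k : ι} (hk : k ∈ s) (hf : ∀ j ∈ s, |f j| ≤ 1) (hd : ∀ j ∈ s, j ≠ k → d j ≤ 0)
    (hsum : ∑ j ∈ s, d j = 0) : |∑ j ∈ s, f j * d j| ≤ 2 * d k := by
  have herase : ∑ j ∈ s.erase k, d j = -d k := by
    linarith [sum_erase_add s d hk]
  have hdk : 0 ≤ d k := by
    have := sum_nonpos fun j hj => hd j (mem_of_mem_erase hj) (ne_of_mem_erase hj)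
    linarith
  calc |∑ j ∈ s, f j * d j| ≤ ∑ j ∈ s, |d j| := by
        refine (abs_sum_le_sum_abs _ _).trans (sum_le_sum fun j hj => ?_)
        rw [abs_mul]
        exact mul_le_of_le_one_left (abs_nonneg _) (hf j hj)
    _ = |d k| + ∑ j ∈ s.erase k, -d j := by
        rw [← add_sum_erase s _ hk]
        congr 1
        exact sum_congr rfl fun j hj =>
          abs_of_nonpos (hd j (mem_of_mem_erase hj) (ne_of_mem_erase hj))
    _ = 2 * d k := by rw [sum_neg_distrib, herase, abs_of_nonneg hdk]; ring

namespace IsNegBinomialWeight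

variable {r p : ℝ} {w : ℕ → ℝ}

lemma steinSolution_eq (hw : IsNegBinomialWeight r p w) (h : ℕ → ℝ) {n k : ℕ}
    (hk : k ≤ n) :
    p * (r + k) * steinSolution w h n (k + 1) - k * steinSolution w h n k = h k := by
  have hmul : ∀ t ≤ n + 1, t * w t * steinSolution w h n t = ∑ i ∈ range t, w i * h i := by
    intro t ht
    rcases t.eq_zero_or_pos with rfl | htpos
    · simp
    have := hw.pos t
    rw [steinSolution_of_le ht, mul_div_cancel₀ _ (by positivity)]
  have hwk := hw.pos k
  refine mul_left_cancel₀ hwk.ne' ?_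
  calc w k * (p * (r + k) * steinSolution w h n (k + 1) - k * steinSolution w h n k)
      = (k + 1 : ℕ) * w (k + 1) * steinSolution w h n (k + 1) -
          k * w k * steinSolution w h n k := by
        rw [Nat.cast_succ, hw.succ_mul]; ring
    _ = w k * h k := by
        rw [hmul _ (by omega), hmul _ (by omega), sum_range_succ]; ring

lemma steinKernel_succ_sub_nonpos (hw : IsNegBinomialWeight r p w) (hr : 0 < r) (hp0 : 0 < p)
    (hp1 : p ≤ 1) (n : ℕ) {j k : ℕ} (hjk : j ≠ k) :
    steinKernel w n j (k + 1) - steinKernel w n j k ≤ 0 := by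
  have hwj := (hw.pos j).le
  rcases hjk.lt_or_gt with hj | hj
  · rw [steinKernel, steinKernel, if_pos (hj.trans k.lt_succ_self), if_pos hj, ← mul_sub]
    exact mul_nonpos_of_nonneg_of_nonpos hwj
      (sub_nonpos.2 (hw.tailRatio_succ_le hr hp0 n (by omega)))
  · rw [steinKernel, steinKernel, if_neg (by omega), if_neg hj.not_gt, ← mul_sub]
    exact mul_nonpos_of_nonneg_of_nonpos hwj
      (by linarith [hw.headRatio_le_succ hr hp0 hp1 k])

lemma steinKernel_succ_sub_self_le (hw : IsNegBinomialWeight r p w) (hr : 0 < r) (hp : 0 < p)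
    {n k : ℕ} (hk : k ≤ n) :
    steinKernel w n k (k + 1) - steinKernel w n k k ≤
      (∑ i ∈ range (n + 1), w i - w 0) / (p * r) := by
  rw [steinKernel, steinKernel, if_pos k.lt_succ_self, if_neg (lt_irrefl k), mul_neg,
    sub_neg_eq_add, ← sum_range_add_sum_Ico _ (show k + 1 ≤ n + 1 by omega)]
  calc w k * tailRatio w n (k + 1) + w k * headRatio w k
      ≤ (∑ i ∈ Ico (k + 1) (n + 1), w i) / (p * r) +
          (∑ i ∈ range (k + 1), w i - w 0) / (p * r) :=
        add_le_add (hw.mul_tailRatio_succ_le hr hp n k) (hw.mul_headRatio_le hr hp k)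
    _ = _ := by ring

lemma abs_steinSolution_succ_sub_le (hw : IsNegBinomialWeight r p w) (hr : 0 < r)
    (hp0 : 0 < p) (hp1 : p ≤ 1) {f : ℕ → ℝ} (hf : ∀ j, |f j| ≤ 1) (n k : ℕ) :
    |steinSolution w (fun i => f i - weightedMean w f n) n (k + 1) -
        steinSolution w (fun i => f i - weightedMean w f n) n k| ≤
      2 * (1 - w 0 / ∑ i ∈ range (n + 1), w i) / (p * r) := by
  set S := ∑ i ∈ range (n + 1), w i
  have hS : 0 < S := sum_pos (fun i _ => hw.pos i) nonempty_range_add_one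
  have hw0 : w 0 ≤ S := single_le_sum (fun i _ => (hw.pos i).le) (mem_range.2 n.succ_pos)
  have hbound : 0 ≤ 2 * (1 - w 0 / S) / (p * r) := by
    have : w 0 / S ≤ 1 := (div_le_one hS).2 hw0
    have := mul_pos hp0 hr
    apply div_nonneg <;> linarith
  rcases le_or_gt k n with hk | hk
  swap
  · rwa [steinSolution_succ_of_le hk, sub_self, abs_zero]
  rw [← mul_le_mul_iff_of_pos_left hS, ← abs_of_pos hS, ← abs_mul, abs_of_pos hS, mul_sub,
    ← sum_mul_steinKernel hS.ne' (by omega), ← sum_mul_steinKernel hS.ne' (by omega),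
    ← sum_sub_distrib]
  simp only [← mul_sub]
  calc _ ≤ 2 * (steinKernel w n k (k + 1) - steinKernel w n k k) :=
        abs_sum_mul_le_two_mul (d := fun j => steinKernel w n j (k + 1) - steinKernel w n j k)
          (mem_range.2 (by omega)) (fun j _ => hf j)
          (fun j _ hj => hw.steinKernel_succ_sub_nonpos hr hp0 hp1 n hj)
          (by rw [sum_sub_distrib, sum_steinKernel hS.ne' (by omega),
            sum_steinKernel hS.ne' (by omega), sub_zero])
    _ ≤ 2 * ((S - w 0) / (p * r)) := by
        gcongr
        exact hw.steinKernel_succ_sub_self_le hr hp0 hk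
    _ = S * (2 * (1 - w 0 / S) / (p * r)) := by field_simp

end IsNegBinomialWeight

lemma abs_sign_le_one (x : ℝ) : |(SignType.sign x : ℝ)| ≤ 1 := by
  cases SignType.sign x <;> simp

lemma sum_mul_sub_weightedMean {P w f : ℕ → ℝ} {n : ℕ}
    (hP : ∑ i ∈ range (n + 1), P i = 1) :
    ∑ i ∈ range (n + 1), P i * (f i - weightedMean w f n) =
      ∑ i ∈ range (n + 1), (P i - w i / ∑ j ∈ range (n + 1), w j) * f i := by
  simp only [mul_sub, sub_mul, sum_sub_distrib, ← sum_mul, hP, one_mul, weightedMean, sum_div]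
  congr 1
  exact sum_congr rfl fun i _ => by ring

lemma integral_comp_eq_sum_range {Ω : Type*} [MeasurableSpace Ω] (μ : Measure Ω)
    [IsFiniteMeasure μ] {W : Ω → ℕ} (hW : Measurable W) {n : ℕ} (hWn : ∀ ω, W ω ≤ n)
    (φ : ℕ → ℝ) :
    ∫ ω, φ (W ω) ∂μ = ∑ i ∈ range (n + 1), (μ {ω | W ω = i}).toReal * φ i := by
  have hsupp : ∀ᵐ i ∂μ.map W, i ∈ (range (n + 1) : Set ℕ) :=
    (ae_map_iff hW.aemeasurable (range (n + 1)).finite_toSet.measurableSet).2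
      (Filter.Eventually.of_forall fun ω => mem_range.2 (Nat.lt_succ_of_le (hWn ω)))
  rw [← integral_map hW.aemeasurable (by fun_prop), integral_eq_setIntegral hsupp,
    setIntegral_finset _ IntegrableOn.finset]
  refine sum_congr rfl fun i _ => ?_
  rw [map_measureReal_apply hW (measurableSet_singleton i), smul_eq_mul, measureReal_def]
  rfl

/-- Main theorem (negative binomial case): if a Stein's-method bound
`|E[p (r+W) g(W+1) - W g(W)]| ≤ C · sup_i |g(i+1) - g(i)|` holds for all bounded
`g : ℕ → ℝ` for a random variable `W` with values in `{0,...,n}`, then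
`d_TV(L(W), NB^{[0,n]}(r,p)) ≤ C (1 - π₀)/(p r) ≤ C (1 - (1-p)^r)/(p r)`. -/
theorem truncNb_approximation {Ω : Type*} [MeasurableSpace Ω]
    (μ : Measure Ω) [IsProbabilityMeasure μ]
    (r p : ℝ) (hr : 0 < r) (hp0 : 0 < p) (hp1 : p < 1)
    (n : ℕ) (W : Ω → ℕ) (hW : Measurable W) (hWn : ∀ ω, W ω ≤ n)
    (C : ℝ) (hC : 0 ≤ C)
    (hstein : ∀ g : ℕ → ℝ, (∃ M : ℝ, ∀ k : ℕ, |g k| ≤ M) →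
      |∫ ω, (p * (r + (W ω : ℝ)) * g (W ω + 1) - (W ω : ℝ) * g (W ω)) ∂μ|
        ≤ C * ⨆ i : ℕ, |g (i + 1) - g i|) :
    (1 / 2) * ∑ i ∈ Finset.range (n + 1),
        |(μ {ω | W ω = i}).toReal - truncNbPmf r p n i|
      ≤ C * ((1 - truncNbPmf r p n 0) / (p * r)) ∧
    C * ((1 - truncNbPmf r p n 0) / (p * r))
      ≤ C * ((1 - (1 - p) ^ r) / (p * r)) := by
  have hw := isNegBinomialWeight_nbPmf hr hp0 hp1
  set P : ℕ → ℝ := fun i => (μ {ω | W ω = i}).toReal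
  set f : ℕ → ℝ := fun i => SignType.sign (P i - truncNbPmf r p n i)
  set g := steinSolution (nbPmf r p) (fun i => f i - weightedMean (nbPmf r p) f n) n
  have hP : ∑ i ∈ range (n + 1), P i = 1 := by
    simpa using (integral_comp_eq_sum_range μ hW hWn fun _ => (1 : ℝ)).symm
  have hsteinOp : ∫ ω, (p * (r + (W ω : ℝ)) * g (W ω + 1) - (W ω : ℝ) * g (W ω)) ∂μ =
      ∑ i ∈ range (n + 1), |P i - truncNbPmf r p n i| := by
    simp only [g, hw.steinSolution_eq _ (hWn _)]
    rw [integral_comp_eq_sum_range μ hW hWn (fun i => f i - weightedMean (nbPmf r p) f n),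
      sum_mul_sub_weightedMean hP]
    exact sum_congr rfl fun i _ => self_mul_sign _
  have hsup : ⨆ i, |g (i + 1) - g i| ≤ 2 * (1 - truncNbPmf r p n 0) / (p * r) :=
    ciSup_le fun k => hw.abs_steinSolution_succ_sub_le hr hp0 hp1.le
      (fun j => abs_sign_le_one _) n k
  refine ⟨?_, ?_⟩
  · calc (1 / 2) * ∑ i ∈ range (n + 1), |P i - truncNbPmf r p n i|
        = (1 / 2) * |∫ ω, (p * (r + (W ω : ℝ)) * g (W ω + 1) - (W ω : ℝ) * g (W ω)) ∂μ| := by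
          rw [hsteinOp, abs_of_nonneg (sum_nonneg fun i _ => abs_nonneg _)]
      _ ≤ (1 / 2) * (C * (2 * (1 - truncNbPmf r p n 0) / (p * r))) := by
          gcongr
          exact (hstein g exists_forall_abs_steinSolution_le).trans (by gcongr)
      _ = C * ((1 - truncNbPmf r p n 0) / (p * r)) := by ring
  · have hπ0 : (1 - p) ^ r ≤ truncNbPmf r p n 0 :=
      nbPmf_zero hr p ▸ nbPmf_le_truncNbPmf hr hp0 hp1 n 0
    gcongr
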